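/- Let n be a natural number, I : Set (Fin n), τ a permutation of Fin n, and ν ∈ H(I). Then for every family 𝒢 : Set (Set (Fin n)), the number of σ ∈ H(I) with 𝒢[σ⁻¹ * τ * σ] = 𝒢 equals the number of σ ∈ H(I) with 𝒢[σ⁻¹ * τ * σ] = (fun B => ν '' B) '' 𝒢. (This is the correctness of the secure grouping protocol: when σ is chosen uniformly from the permutations fixing I, each achievable grouping, and any relabeling of it by a permutation fixing I, occurs with equal probability.) -/

import Mathlib

/-- The grouping (orbit partition) specified by a permutation. -/
def grouping {n : ℕ} (π : Equiv.Perm (Fin n)) : Set (Set (Fin n)) :=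
  Set.range (fun i => {x | Equiv.Perm.SameCycle π i x})

/-- The set of permutations fixing every element of `I` pointwise. -/
def fixesSet {n : ℕ} (I : Set (Fin n)) : Set (Equiv.Perm (Fin n)) :=
  {σ | ∀ a ∈ I, σ a = a}

/-! Right multiplication by `ν⁻¹` preserves `H(I)` and turns the conjugate `σ⁻¹ τ σ` into
`ν (σ⁻¹ τ σ) ν⁻¹`, whose grouping is the relabeling by `ν` of that of `σ⁻¹ τ σ`. Since relabeling
by `ν` is injective on families of sets, it is a bijection between the two sets of `σ`. -/

theorem Equiv.Perm.setOf_sameCycle_conj {α : Type*} (π ν : Equiv.Perm α) (i : α) :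
    {x | (ν * π * ν⁻¹).SameCycle (ν i) x} = ν '' {x | π.SameCycle i x} := by
  ext x
  rw [Set.mem_ofPred_eq, Equiv.Perm.sameCycle_conj, Equiv.Perm.inv_def, Equiv.symm_apply_apply,
    Equiv.image_eq_preimage_symm]
  rfl

theorem grouping_conj {n : ℕ} (π ν : Equiv.Perm (Fin n)) :
    grouping (ν * π * ν⁻¹) = (fun B => ν '' B) '' grouping π := by
  rw [grouping, ← ν.surjective.range_comp, grouping, ← Set.range_comp]
  exact congrArg Set.range (funext (Equiv.Perm.setOf_sameCycle_conj π ν))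

theorem fixesSet_eq_fixingSubgroup {n : ℕ} (I : Set (Fin n)) :
    fixesSet I = fixingSubgroup (Equiv.Perm (Fin n)) I := by
  ext σ
  simp [fixesSet, mem_fixingSubgroup_iff]

theorem secure_grouping_correctness {n : ℕ} (I : Set (Fin n)) (τ : Equiv.Perm (Fin n))
    (ν : Equiv.Perm (Fin n)) (hν : ν ∈ fixesSet I) (𝒢 : Set (Set (Fin n))) :
    Nat.card {σ : Equiv.Perm (Fin n) // σ ∈ fixesSet I ∧ grouping (σ⁻¹ * τ * σ) = 𝒢} =
      Nat.card {σ : Equiv.Perm (Fin n) //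
        σ ∈ fixesSet I ∧ grouping (σ⁻¹ * τ * σ) = (fun B => ⇑ν '' B) '' 𝒢} := by
  rw [fixesSet_eq_fixingSubgroup] at hν ⊢
  have relabel_injective :
      Function.Injective fun 𝒢 : Set (Set (Fin n)) => (fun B => ν '' B) '' 𝒢 :=
    Set.image_injective.2 (Set.image_injective.2 ν.injective)
  refine Nat.card_congr (Equiv.subtypeEquiv (Equiv.mulRight ν⁻¹) fun σ => ?_)
  have hconj : (σ * ν⁻¹)⁻¹ * τ * (σ * ν⁻¹) = ν * (σ⁻¹ * τ * σ) * ν⁻¹ := by group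
  rw [Equiv.coe_mulRight, SetLike.mem_coe, SetLike.mem_coe,
    Subgroup.mul_mem_cancel_right _ (inv_mem hν), hconj, grouping_conj, relabel_injective.eq_iff]
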